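/- arXiv:2505.13285 — 5 statements merged into one kernel-verified Lean document; each statement's English description precedes it below -/
import Mathlib

section
/- For every connected compact set K ⊆ ℂ with diameter d = d(K) > 0 and nonzero minimal width w = w(K) > 0, and every integer n with n > d²/(459·w²), one has M_n(K) ≤ 600·w·n/d². -/
/-!
Take `a, b ∈ K` with `|a - b| = d` and `P = (z - a)^⌈n/2⌉ (z - b)^⌊n/2⌋`. As `K` is connected it
contains a point at distance `d/2` from `a`, so `‖P‖_K ≥ (d/2)^n`. On the other hand
`P'(z) = n (z - a)^(⌈n/2⌉-1) (z - b)^(⌊n/2⌋-1) (z - ζ)` with `ζ = a + ⌈n/2⌉ (b - a)/n ≈ (a + b)/2`.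
Put `K` in a strip of width `W > w` and rescale to `d = 1`. Where `|z - ζ|` is at most about
`600 W |z - a| |z - b|` we get `|P'(z)| ≤ 600 W n |P(z)|`. Elsewhere `|P'(z)|` is compared with
`(1/2)^n`: near the ends of the strip `|z - a| |z - b| ≤ 3/14`, while near the middle `z` is far
from `ζ`, so `4 |z - a| |z - b| ≤ 1 - c` with `c` proportional to `|z - (a + b)/2|²`. Either way
the decay of `(4 |z - a| |z - b|)^(⌊n/2⌋-1)` absorbs the remaining factors since `n W² > 1/459`.
-/

open Polynomial

/-- The sup-norm of a polynomial over a set `K ⊆ ℂ`. -/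
noncomputable def polyNorm (K : Set ℂ) (P : Polynomial ℂ) : ℝ :=
  sSup ((fun z => ‖P.eval z‖) '' K)

/-- The Tur\'an type inverse Markov factor
`M_n(K) = inf { ‖P'‖_K / ‖P‖_K : P of exact degree n with all zeros in K }`. -/
noncomputable def invMarkov (n : ℕ) (K : Set ℂ) : ℝ :=
  sInf { r : ℝ | ∃ P : Polynomial ℂ, P ≠ 0 ∧ P.natDegree = n ∧
    (∀ z : ℂ, P.IsRoot z → z ∈ K) ∧
    r = polyNorm K (Polynomial.derivative P) / polyNorm K P }

/-- The minimal width of a set `K ⊆ ℂ`: the infimum over unit directions `u` of the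
width of `K` in direction `u`. -/
noncomputable def minWidth (K : Set ℂ) : ℝ :=
  sInf { r : ℝ | ∃ u : ℂ, ‖u‖ = 1 ∧
    r = sSup ((fun z => ((starRingEnd ℂ) u * z).re) '' K)
      - sInf ((fun z => ((starRingEnd ℂ) u * z).re) '' K) }

lemma one_add_mul_mul_one_sub_pow_le_one (e : ℕ) {c : ℝ} (hc0 : 0 ≤ c) (hc1 : c ≤ 1) :
    (1 + e * c) * (1 - c) ^ e ≤ 1 :=
  calc (1 + e * c) * (1 - c) ^ e ≤ (1 + c) ^ e * (1 - c) ^ e := by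
        gcongr
        exact one_add_mul_le_pow (by linarith) e
    _ = (1 - c ^ 2) ^ e := by rw [← mul_pow]; ring
    _ ≤ 1 := pow_le_one₀ (by nlinarith) (by nlinarith)

lemma two_mul_add_eleven_le_pow (e : ℕ) : (2 * e + 11 : ℝ) ≤ 11 * (49 / 36) ^ e := by
  induction e with
  | zero => norm_num
  | succ e ih =>
    have : (1 : ℝ) ≤ (49 / 36) ^ e := one_le_pow₀ (by norm_num)
    push_cast
    rw [pow_succ]
    nlinarith

lemma six_div_seven_pow_le {e : ℕ} {q : ℝ} (hq : 0 < q) (h : 1 < 459 * (2 * e + 3) * q ^ 2) :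
    (6 / 7 : ℝ) ^ e ≤ 74 * q := by
  have hpow : (36 / 49 : ℝ) ^ e * (2 * e + 11) ≤ 11 := by
    have h1 : (36 / 49 : ℝ) ^ e * (49 / 36) ^ e = 1 := by rw [← mul_pow]; norm_num
    nlinarith [two_mul_add_eleven_le_pow e, pow_pos (by norm_num : (0 : ℝ) < 36 / 49) e]
  have hsq : ((6 / 7 : ℝ) ^ e) ^ 2 = (36 / 49) ^ e := by rw [← pow_mul, mul_comm, pow_mul]; norm_num
  refine (pow_le_pow_iff_left₀ (by positivity) (by positivity) two_ne_zero).mp ?_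
  rw [hsq]
  nlinarith [pow_pos (by norm_num : (0 : ℝ) < 36 / 49) e, sq_nonneg q]

lemma le_add_of_sq_le_sq_add_sq {u s q : ℝ} (hs : 0 ≤ s) (hq : 0 ≤ q) (h : u ^ 2 ≤ s ^ 2 + q ^ 2) :
    u ≤ s + q :=
  abs_le_of_sq_le_sq' (by nlinarith) (by positivity) |>.2

lemma le_add_sq_div_of_sq_le_sq_add_sq {u s q : ℝ} (hs : 0 < s) (h : u ^ 2 ≤ s ^ 2 + q ^ 2) :
    u ≤ s + q ^ 2 / (2 * s) := by
  refine abs_le_of_sq_le_sq' ?_ (by positivity) |>.2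
  have : (s + q ^ 2 / (2 * s)) ^ 2 = s ^ 2 + q ^ 2 + (q ^ 2 / (2 * s)) ^ 2 := by
    field_simp; ring
  nlinarith [sq_nonneg (q ^ 2 / (2 * s))]

lemma pow_mul_le_of_le_three_div_fourteen {j : ℕ} {q r s : ℝ} (hq : 0 < q)
    (hj : 1 < 459 * (2 * j + 3) * q ^ 2) (hr0 : 0 ≤ r) (hr : r ≤ 3 / 14) (hs0 : 0 ≤ s)
    (hs : s ≤ 75 / 74) : r ^ j * s ≤ 75 * q * (1 / 4) ^ j :=
  calc r ^ j * s ≤ (6 / 7 * (1 / 4)) ^ j * (75 / 74) := by norm_num; gcongr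
    _ = (6 / 7) ^ j * (75 / 74) * (1 / 4) ^ j := by rw [mul_pow]; ring
    _ ≤ (74 * q) * (75 / 74) * (1 / 4) ^ j := by gcongr; exact six_div_seven_pow_le hq hj
    _ = 75 * q * (1 / 4) ^ j := by ring

/-- With `c = 39 η² / 10`, the bound `s ≤ 75 q (1 + j c)` holds because the quadratic
`292.5 j q η² - η + 70.875 q` has nonpositive discriminant; then `(1 + j c) (1 - c)^j ≤ 1`. -/
lemma pow_mul_le_of_four_mul_le {j : ℕ} {q r s η : ℝ} (hq : 0 < q) (hq74 : q < 1 / 74)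
    (hj : 1 < 459 * (2 * j + 3) * q ^ 2) (hr0 : 0 ≤ r) (hη2 : 39 / 10 * η ^ 2 ≤ 1)
    (hr : 4 * r ≤ 1 - 39 / 10 * η ^ 2) (hs0 : 0 ≤ s) (hs : s ≤ η + 33 / 8 * q) :
    r ^ j * s ≤ 75 * q * (1 / 4) ^ j := by
  set c := 39 / 10 * η ^ 2 with hc
  have hj1 : (1 : ℝ) ≤ j := by
    rcases j with _ | j
    · nlinarith
    · simp
  have hA : 0 < 585 / 2 * j * q := by positivity
  have hdisc : 1 ≤ 4 * (585 / 2 * j * q) * (567 / 8 * q) := by nlinarith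
  have hquad : 0 ≤ 585 / 2 * j * q * η ^ 2 - η + 567 / 8 * q := by
    nlinarith [sq_nonneg (2 * (585 / 2 * j * q) * η - 1)]
  have hs' : s ≤ 75 * q * (1 + j * c) := by nlinarith
  calc r ^ j * s = (1 / 4) ^ j * ((4 * r) ^ j * s) := by rw [← mul_assoc, ← mul_pow]; ring_nf
    _ ≤ (1 / 4) ^ j * ((1 - c) ^ j * (75 * q * (1 + j * c))) := by gcongr
    _ = 75 * q * (1 / 4) ^ j * ((1 + j * c) * (1 - c) ^ j) := by ring
    _ ≤ 75 * q * (1 / 4) ^ j * 1 := by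
        gcongr; exact one_add_mul_mul_one_sub_pow_le_one j (by positivity) hη2
    _ = 75 * q * (1 / 4) ^ j := mul_one _

lemma abs_add_one_mul_div_sub_half_le {i j n : ℕ} (hji : j ≤ i) (hij : i ≤ j + 1)
    (hn : i + j + 2 = n) {D : ℝ} (hD0 : 0 ≤ D) (hD1 : D ≤ 1) :
    |(i + 1) * D / n - D / 2| ≤ 1 / (2 * n) := by
  have hnR : (n : ℝ) = i + j + 2 := by rw [← hn]; push_cast; ring
  have hjiR : (j : ℝ) ≤ i := by exact_mod_cast hji
  have hijR : (i : ℝ) ≤ j + 1 := by exact_mod_cast hij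
  have hnpos : (0 : ℝ) < 2 * n := by rw [hnR]; positivity
  have : (i + 1) * D / n - D / 2 = (i - j) * D / (2 * n) := by rw [hnR]; field_simp; ring
  rw [this, abs_div, abs_of_pos hnpos, abs_of_nonneg (by nlinarith)]
  gcongr
  nlinarith

/-- Two points `a`, `b` and a point `z` of a set of diameter `d` lying in a strip of width `q`:
`x` and `D` are the coordinates of `z - a` and `b - a` along the strip, `u = |z - a|` and
`v = |z - b|`. -/
structure StripConfig (d q D x u v : ℝ) : Prop where
  q_pos : 0 < q
  D_nonneg : 0 ≤ D
  D_le : D ≤ d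
  sq_sub_sq_le : d ^ 2 - q ^ 2 ≤ D ^ 2
  u_le : u ≤ d
  v_le : v ≤ d
  abs_le_u : |x| ≤ u
  abs_sub_le_v : |x - D| ≤ v
  sq_u_le : u ^ 2 ≤ x ^ 2 + q ^ 2
  sq_v_le : v ^ 2 ≤ (x - D) ^ 2 + q ^ 2

namespace StripConfig

variable {d q D x u v : ℝ}

lemma scale (h : StripConfig d q D x u v) (hd : 0 < d) :
    StripConfig 1 (q / d) (D / d) (x / d) (u / d) (v / d) where
  q_pos := div_pos h.q_pos hd
  D_nonneg := div_nonneg h.D_nonneg hd.le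
  D_le := (div_le_one hd).2 h.D_le
  sq_sub_sq_le := by
    rw [div_pow, div_pow, one_pow, le_div_iff₀ (by positivity)]
    field_simp
    linarith [h.sq_sub_sq_le]
  u_le := (div_le_one hd).2 h.u_le
  v_le := (div_le_one hd).2 h.v_le
  abs_le_u := by rw [abs_div, abs_of_pos hd]; gcongr; exact h.abs_le_u
  abs_sub_le_v := by rw [← sub_div, abs_div, abs_of_pos hd]; gcongr; exact h.abs_sub_le_v
  sq_u_le := by
    rw [div_pow, div_pow, div_pow, ← add_div]; gcongr; exact h.sq_u_le
  sq_v_le := by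
    rw [← sub_div, div_pow, div_pow, div_pow, ← add_div]; gcongr; exact h.sq_v_le

lemma u_nonneg (h : StripConfig d q D x u v) : 0 ≤ u := (abs_nonneg x).trans h.abs_le_u

lemma v_nonneg (h : StripConfig d q D x u v) : 0 ≤ v := (abs_nonneg _).trans h.abs_sub_le_v

lemma abs_le_diam (h : StripConfig d q D x u v) : |x| ≤ d := h.abs_le_u.trans h.u_le

lemma abs_sub_le_diam (h : StripConfig d q D x u v) : |x - D| ≤ d := h.abs_sub_le_v.trans h.v_le

lemma abs_sub_le_diam_of_mem (h : StripConfig d q D x u v) {p : ℝ} (hp0 : 0 ≤ p) (hpD : p ≤ D) :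
    |x - p| ≤ d := by
  have h1 := _root_.abs_le.1 h.abs_le_diam
  have h2 := _root_.abs_le.1 h.abs_sub_le_diam
  exact _root_.abs_le.2 ⟨by linarith, by linarith⟩

lemma mul_le (h : StripConfig d q D x u v) : u * v ≤ (|x| + q) * (|x - D| + q) := by
  have hq := h.q_pos.le
  exact mul_le_mul
    (le_add_of_sq_le_sq_add_sq (abs_nonneg x) hq (by rw [sq_abs]; exact h.sq_u_le))
    (le_add_of_sq_le_sq_add_sq (abs_nonneg _) hq (by rw [sq_abs]; exact h.sq_v_le))
    h.v_nonneg (by positivity)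

lemma one_sub_sq_le (h : StripConfig 1 q D x u v) : 1 - q ^ 2 ≤ D := by
  nlinarith [h.sq_sub_sq_le, h.D_nonneg, h.D_le]

lemma abs_add_abs_sub_le (h : StripConfig 1 q D x u v) : |x| + |x - D| ≤ 1 + q ^ 2 := by
  have h1 := _root_.abs_le.1 h.abs_le_diam
  have h2 := _root_.abs_le.1 h.abs_sub_le_diam
  have hD := h.one_sub_sq_le
  rcases le_total x 0 with hx | hx
  · rw [abs_of_nonpos hx, abs_of_nonpos (by linarith [h.D_nonneg])]; linarith
  rcases le_total x D with hxD | hxD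
  · rw [abs_of_nonneg hx, abs_of_nonpos (by linarith)]; linarith [h.D_le, sq_nonneg q]
  · rw [abs_of_nonneg hx, abs_of_nonneg (by linarith)]; linarith

/-- Outside `(0, D)` the point is within `q²` of an end, so the product of the distances
is small. -/
lemma mem_Ioo (h : StripConfig 1 q D x u v) (hq : q ^ 2 < 1 / 5)
    (hmid : 1 / 5 < |x| * |x - D|) : x ∈ Set.Ioo 0 D := by
  have h1 := _root_.abs_le.1 h.abs_le_diam
  have h2 := _root_.abs_le.1 h.abs_sub_le_diam
  have hD := h.one_sub_sq_le
  constructor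
  · by_contra! hx
    rw [abs_of_nonpos hx, abs_of_nonpos (by linarith [h.D_nonneg])] at hmid
    nlinarith
  · by_contra! hx
    rw [abs_of_nonneg (by linarith [h.D_nonneg]), abs_of_nonneg (by linarith)] at hmid
    nlinarith

lemma four_mul_le (h : StripConfig 1 q D x u v) (hq : q ^ 2 ≤ 1 / 25)
    (hmid : 1 / 5 < |x| * |x - D|) : 4 * (u * v) ≤ 1 - 4 * (x - D / 2) ^ 2 + 11 * q ^ 2 := by
  obtain ⟨hx, hxD⟩ := h.mem_Ioo (by linarith) hmid
  rw [abs_of_pos hx, abs_of_neg (by linarith)] at hmid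
  have hD1 := h.D_le
  have hx5 : 1 / 5 ≤ x := by nlinarith
  have hxD5 : 1 / 5 ≤ D - x := by nlinarith
  have hu : u ≤ x + 5 / 2 * q ^ 2 := by
    refine (le_add_sq_div_of_sq_le_sq_add_sq (by linarith) h.sq_u_le).trans ?_
    gcongr
    rw [div_le_iff₀ (by linarith)]
    nlinarith [sq_nonneg q]
  have hv2 : v ^ 2 ≤ (D - x) ^ 2 + q ^ 2 := by simpa only [← neg_sub D x, neg_sq] using h.sq_v_le
  have hv : v ≤ (D - x) + 5 / 2 * q ^ 2 := by
    refine (le_add_sq_div_of_sq_le_sq_add_sq (by linarith) hv2).trans ?_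
    gcongr
    rw [div_le_iff₀ (by linarith)]
    nlinarith [sq_nonneg q]
  have := mul_le_mul hu hv h.v_nonneg (by positivity)
  nlinarith [sq_nonneg q, h.D_nonneg]

lemma pow_mul_le_of_far (h : StripConfig 1 q D x u v) {j : ℕ} {p : ℝ}
    (hj : 1 < 459 * (2 * j + 3) * q ^ 2) (hp0 : 0 ≤ p) (hpD : p ≤ D)
    (hp : |p - D / 2| ≤ 230 * q ^ 2) (hfar : 600 * q * (u * v) < |x - p| + q) :
    (u * v) ^ j * (|x - p| + q) ≤ 75 * q * (1 / 4) ^ j := by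
  have hq := h.q_pos
  have huv := mul_nonneg h.u_nonneg h.v_nonneg
  have hξ1 := h.abs_sub_le_diam_of_mem hp0 hpD
  rcases le_or_gt (1 / 74) q with hq74 | hq74
  · have hr : u * v ≤ 1 / 4 := by nlinarith
    calc (u * v) ^ j * (|x - p| + q) ≤ (1 / 4) ^ j * (75 * q) := by gcongr; linarith
      _ = 75 * q * (1 / 4) ^ j := by ring
  have hq2 : q ^ 2 < 1 / 5476 := by nlinarith
  have hsum := h.abs_add_abs_sub_le
  rcases le_or_gt (|x| * |x - D|) (1 / 5) with hend | hmid
  · refine pow_mul_le_of_le_three_div_fourteen hq hj huv ?_ (by positivity) (by linarith)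
    have := h.mul_le
    nlinarith [abs_nonneg x, abs_nonneg (x - D)]
  · set η := |x - D / 2|
    have h4 := h.four_mul_le (by linarith) hmid
    rw [← sq_abs] at h4
    have hξη : |x - p| ≤ η + 230 * q ^ 2 := by
      have := abs_sub_le x (D / 2) p
      rw [abs_sub_comm (D / 2)] at this
      linarith
    have huv5 : 1 / 5 < u * v :=
      hmid.trans_le (mul_le_mul h.abs_le_u h.abs_sub_le_v (abs_nonneg _) h.u_nonneg)
    -- `hfar` and `u v > 1/5` put `x` at distance `> 119 q` from `p`, so far from `D / 2`
    have hη : 115 * q ≤ η := by nlinarith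
    have hη2 : (115 * q) ^ 2 ≤ η ^ 2 := by gcongr
    refine pow_mul_le_of_four_mul_le (η := η) hq hq74 hj huv ?_ ?_ (by positivity) (by nlinarith)
    · nlinarith
    · nlinarith

lemma pow_mul_pow_mul_le_of_diam_one (h : StripConfig 1 q D x u v) {i j n : ℕ} (hji : j ≤ i)
    (hij : i ≤ j + 1) (hn : i + j + 2 = n) (hqn : 1 < 459 * n * q ^ 2) :
    u ^ i * v ^ j * (|x - (i + 1) * D / n| + q)
      ≤ 600 * q * max ((1 / 2) ^ n) (u ^ (i + 1) * v ^ (j + 1)) := by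
  have hq := h.q_pos
  have hD := h.D_nonneg
  have hu := h.u_nonneg
  have hv := h.v_nonneg
  have hnR : (n : ℝ) = i + j + 2 := by rw [← hn]; push_cast; ring
  have hnpos : (0 : ℝ) < n := by rw [hnR]; positivity
  set p := (i + 1) * D / n
  have hp0 : 0 ≤ p := by positivity
  have hpD : p ≤ D := by
    rw [div_le_iff₀ hnpos, hnR]; nlinarith [mul_nonneg hD (Nat.cast_nonneg j : (0 : ℝ) ≤ j)]
  have hp : |p - D / 2| ≤ 230 * q ^ 2 :=
    (abs_add_one_mul_div_sub_half_le hji hij hn hD h.D_le).trans <| by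
      rw [div_le_iff₀ (by positivity)]; nlinarith
  rcases le_or_gt (|x - p| + q) (600 * q * (u * v)) with hnear | hfar
  · calc u ^ i * v ^ j * (|x - p| + q) ≤ u ^ i * v ^ j * (600 * q * (u * v)) := by gcongr
      _ = 600 * q * (u ^ (i + 1) * v ^ (j + 1)) := by ring
      _ ≤ _ := by gcongr; exact le_max_right _ _
  · have hj : 1 < 459 * (2 * j + 3) * q ^ 2 := by
      have : (n : ℝ) ≤ 2 * j + 3 := by exact_mod_cast (by omega : n ≤ 2 * j + 3)
      nlinarith
    have hn2 : (1 / 4 : ℝ) ^ j = 8 * (1 / 2) ^ (2 * j + 3) := by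
      rw [pow_add, pow_mul]; norm_num; ring
    calc u ^ i * v ^ j * (|x - p| + q) ≤ (u * v) ^ j * (|x - p| + q) := by
          rw [mul_pow]
          have := pow_le_pow_of_le_one hu h.u_le hji
          gcongr
      _ ≤ 75 * q * (1 / 4) ^ j := h.pow_mul_le_of_far hj hp0 hpD hp hfar
      _ ≤ 600 * q * (1 / 2) ^ n := by
          rw [hn2]
          have : (1 / 2 : ℝ) ^ (2 * j + 3) ≤ (1 / 2) ^ n :=
            pow_le_pow_of_le_one (by norm_num) (by norm_num) (by omega)
          nlinarith
      _ ≤ _ := by gcongr; exact le_max_left _ _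

lemma pow_mul_pow_mul_le (h : StripConfig d q D x u v) (hd : 0 < d) {i j n : ℕ} (hji : j ≤ i)
    (hij : i ≤ j + 1) (hn : i + j + 2 = n) (hqn : d ^ 2 < 459 * n * q ^ 2) :
    u ^ i * v ^ j * (|x - (i + 1) * D / n| + q) * d ^ 2
      ≤ 600 * q * max ((d / 2) ^ n) (u ^ (i + 1) * v ^ (j + 1)) := by
  have hqn' : 1 < 459 * n * (q / d) ^ 2 := by
    rw [div_pow, ← mul_div_assoc, one_lt_div (by positivity)]; exact hqn
  have key := (h.scale hd).pow_mul_pow_mul_le_of_diam_one hji hij hn hqn'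
  have hxi : |x / d - (i + 1) * (D / d) / n| = |x - (i + 1) * D / n| / d := by
    rw [← abs_of_pos hd, ← abs_div, abs_of_pos hd]; ring_nf
  have hdn : d ^ (n + 1) = d ^ i * d ^ j * d ^ 2 * d := by rw [← hn]; ring
  have hmax : max ((1 / 2) ^ n) ((u / d) ^ (i + 1) * (v / d) ^ (j + 1)) * d ^ n
      = max ((d / 2) ^ n) (u ^ (i + 1) * v ^ (j + 1)) := by
    rw [max_mul_of_nonneg _ _ (by positivity)]
    congr 1
    · rw [← mul_pow]; ring
    · rw [← hn, div_pow, div_pow]; field_simp; ring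
  calc u ^ i * v ^ j * (|x - (i + 1) * D / n| + q) * d ^ 2
      = (u / d) ^ i * (v / d) ^ j * (|x / d - (i + 1) * (D / d) / n| + q / d) * d ^ (n + 1) := by
        rw [hxi, hdn, div_pow, div_pow]; field_simp
    _ ≤ 600 * (q / d) * max ((1 / 2) ^ n) ((u / d) ^ (i + 1) * (v / d) ^ (j + 1))
          * d ^ (n + 1) := by gcongr
    _ = 600 * q * max ((d / 2) ^ n) (u ^ (i + 1) * v ^ (j + 1)) := by
        rw [← hmax, pow_succ]; field_simp; ring

end StripConfig

lemma Complex.sq_norm_le_im_sq_add {w : ℂ} {W : ℝ} (h : |w.re| ≤ W) :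
    ‖w‖ ^ 2 ≤ w.im ^ 2 + W ^ 2 := by
  rw [Complex.sq_norm, Complex.normSq_apply]
  nlinarith [sq_abs w.re, abs_nonneg w.re]

lemma StripConfig.of_complex {z a b : ℂ} {W : ℝ} (hW : 0 < W) (hza : |(z - a).re| ≤ W)
    (hzb : |(z - b).re| ≤ W) (hab : |(b - a).re| ≤ W) (hD : 0 ≤ (b - a).im)
    (hzad : ‖z - a‖ ≤ ‖b - a‖) (hzbd : ‖z - b‖ ≤ ‖b - a‖) :
    StripConfig ‖b - a‖ W (b - a).im (z - a).im ‖z - a‖ ‖z - b‖ := by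
  have hxD : (z - a).im - (b - a).im = (z - b).im := by simp
  exact
    { q_pos := hW
      D_nonneg := hD
      D_le := (le_abs_self _).trans (Complex.abs_im_le_norm _)
      sq_sub_sq_le := by linarith [Complex.sq_norm_le_im_sq_add hab]
      u_le := hzad
      v_le := hzbd
      abs_le_u := Complex.abs_im_le_norm _
      abs_sub_le_v := hxD ▸ Complex.abs_im_le_norm _
      sq_u_le := Complex.sq_norm_le_im_sq_add hza
      sq_v_le := hxD ▸ Complex.sq_norm_le_im_sq_add hzb }

lemma norm_add_one_mul_add_add_one_mul_le {z a b : ℂ} {W : ℝ} (hza : |(z - a).re| ≤ W)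
    (hzb : |(z - b).re| ≤ W) {i j n : ℕ} (hn : i + j + 2 = n) :
    ‖(i + 1 : ℂ) * (z - b) + (j + 1 : ℂ) * (z - a)‖
      ≤ n * (|(z - a).im - (i + 1) * (b - a).im / n| + W) := by
  set w := (i + 1 : ℂ) * (z - b) + (j + 1 : ℂ) * (z - a)
  have hnR : (n : ℝ) = (i + 1) + (j + 1) := by rw [← hn]; push_cast; ring
  have hre : |w.re| ≤ n * W := by
    have : w.re = (i + 1) * (z - b).re + (j + 1) * (z - a).re := by simp [w]
    rw [this, hnR]
    refine (abs_add_le _ _).trans ?_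
    rw [abs_mul, abs_mul, abs_of_pos (by positivity : (0 : ℝ) < i + 1),
      abs_of_pos (by positivity : (0 : ℝ) < j + 1)]
    linarith [mul_le_mul_of_nonneg_left hzb (by positivity : (0 : ℝ) ≤ i + 1),
      mul_le_mul_of_nonneg_left hza (by positivity : (0 : ℝ) ≤ j + 1)]
  have him : w.im = n * ((z - a).im - (i + 1) * (b - a).im / n) := by
    have : (n : ℝ) ≠ 0 := by rw [hnR]; positivity
    simp only [w, Complex.add_im, Complex.mul_im, Complex.add_re, Complex.sub_im,
      Complex.natCast_re, Complex.natCast_im, Complex.one_re, Complex.one_im, add_zero, zero_mul]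
    field_simp
    rw [hnR]
    ring
  calc ‖w‖ ≤ |w.re| + |w.im| := Complex.norm_le_abs_re_add_abs_im w
    _ ≤ n * W + n * |(z - a).im - (i + 1) * (b - a).im / n| := by
        rw [him, abs_mul, Nat.abs_cast]; gcongr
    _ = n * (|(z - a).im - (i + 1) * (b - a).im / n| + W) := by ring

lemma norm_pow_mul_pow_mul_le {z a b : ℂ} {W : ℝ} (hW : 0 < W) (hza : |(z - a).re| ≤ W)
    (hzb : |(z - b).re| ≤ W) (hab : |(b - a).re| ≤ W) (hd : 0 < ‖b - a‖)
    (hzad : ‖z - a‖ ≤ ‖b - a‖) (hzbd : ‖z - b‖ ≤ ‖b - a‖) {i j n : ℕ} (hji : j ≤ i)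
    (hij : i ≤ j + 1) (hn : i + j + 2 = n) (hqn : ‖b - a‖ ^ 2 < 459 * n * W ^ 2) :
    ‖z - a‖ ^ i * ‖z - b‖ ^ j * ‖(i + 1 : ℂ) * (z - b) + (j + 1 : ℂ) * (z - a)‖ * ‖b - a‖ ^ 2
      ≤ 600 * W * n * max ((‖b - a‖ / 2) ^ n) (‖z - a‖ ^ (i + 1) * ‖z - b‖ ^ (j + 1)) := by
  wlog hD : 0 ≤ (b - a).im generalizing z a b
  · have hconj : ∀ w w' : ℂ, ‖(starRingEnd ℂ) w - (starRingEnd ℂ) w'‖ = ‖w - w'‖ := fun w w' => by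
      rw [← map_sub, Complex.norm_conj]
    have := this (z := (starRingEnd ℂ) z) (a := (starRingEnd ℂ) a) (b := (starRingEnd ℂ) b)
      (by rwa [← map_sub, Complex.conj_re]) (by rwa [← map_sub, Complex.conj_re])
      (by rwa [← map_sub, Complex.conj_re]) (by rwa [hconj]) (by rwa [hconj, hconj])
      (by rwa [hconj, hconj]) (by rwa [hconj])
      (by rw [← map_sub, Complex.conj_im]; linarith [not_le.1 hD])
    have hcomb : (i + 1 : ℂ) * ((starRingEnd ℂ) z - (starRingEnd ℂ) b)
        + (j + 1 : ℂ) * ((starRingEnd ℂ) z - (starRingEnd ℂ) a)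
        = (starRingEnd ℂ) ((i + 1 : ℂ) * (z - b) + (j + 1 : ℂ) * (z - a)) := by simp
    rwa [hcomb, Complex.norm_conj, hconj, hconj, hconj] at this
  calc ‖z - a‖ ^ i * ‖z - b‖ ^ j * ‖(i + 1 : ℂ) * (z - b) + (j + 1 : ℂ) * (z - a)‖ * ‖b - a‖ ^ 2
      ≤ ‖z - a‖ ^ i * ‖z - b‖ ^ j * (n * (|(z - a).im - (i + 1) * (b - a).im / n| + W))
          * ‖b - a‖ ^ 2 := by gcongr; exact norm_add_one_mul_add_add_one_mul_le hza hzb hn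
    _ = n * (‖z - a‖ ^ i * ‖z - b‖ ^ j * (|(z - a).im - (i + 1) * (b - a).im / n| + W)
          * ‖b - a‖ ^ 2) := by ring
    _ ≤ n * (600 * W * max ((‖b - a‖ / 2) ^ n) (‖z - a‖ ^ (i + 1) * ‖z - b‖ ^ (j + 1))) :=
        mul_le_mul_of_nonneg_left ((StripConfig.of_complex hW hza hzb hab hD hzad hzbd)
          |>.pow_mul_pow_mul_le hd hji hij hn hqn) (by positivity)
    _ = _ := by ring

lemma polyNorm_nonneg (K : Set ℂ) (P : ℂ[X]) : 0 ≤ polyNorm K P :=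
  Real.sSup_nonneg <| by rintro _ ⟨z, -, rfl⟩; exact norm_nonneg _

lemma norm_eval_le_polyNorm {K : Set ℂ} (hK : IsCompact K) (P : ℂ[X]) {z : ℂ} (hz : z ∈ K) :
    ‖P.eval z‖ ≤ polyNorm K P :=
  le_csSup (hK.image (continuous_norm.comp P.continuous)).bddAbove ⟨z, hz, rfl⟩

lemma polyNorm_le {K : Set ℂ} (hK : K.Nonempty) {P : ℂ[X]} {M : ℝ}
    (h : ∀ z ∈ K, ‖P.eval z‖ ≤ M) : polyNorm K P ≤ M :=
  csSup_le (hK.image _) <| by rintro _ ⟨z, hz, rfl⟩; exact h z hz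

lemma invMarkov_le {K : Set ℂ} {n : ℕ} {P : ℂ[X]} (hP : P ≠ 0) (hdeg : P.natDegree = n)
    (hroots : ∀ z, P.IsRoot z → z ∈ K) :
    invMarkov n K ≤ polyNorm K (derivative P) / polyNorm K P :=
  csInf_le ⟨0, by
    rintro _ ⟨Q, -, -, -, rfl⟩; exact div_nonneg (polyNorm_nonneg _ _) (polyNorm_nonneg _ _)⟩
    ⟨P, hP, hdeg, hroots, rfl⟩

lemma IsCompact.exists_dist_eq_diam {X : Type*} [PseudoMetricSpace X] {K : Set X}
    (hK : IsCompact K) (hne : K.Nonempty) :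
    ∃ a ∈ K, ∃ b ∈ K, dist a b = Metric.diam K := by
  obtain ⟨p, hp, hmax⟩ := (hK.prod hK).exists_isMaxOn (hne.prod hne)
    (continuous_fst.dist continuous_snd).continuousOn
  refine ⟨p.1, hp.1, p.2, hp.2, le_antisymm (Metric.dist_le_diam_of_mem hK.isBounded hp.1 hp.2) ?_⟩
  exact Metric.diam_le_of_forall_dist_le dist_nonneg fun x hx y hy => hmax (Set.mk_mem_prod hx hy)

lemma IsPreconnected.exists_dist_eq {X : Type*} [PseudoMetricSpace X] {K : Set X}
    (hK : IsPreconnected K) {a b : X} (ha : a ∈ K) (hb : b ∈ K) {r : ℝ} (hr0 : 0 ≤ r)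
    (hr : r ≤ dist b a) : ∃ z ∈ K, dist z a = r := by
  have := hK.intermediate_value (f := (dist · a)) ha hb
    (continuous_id.dist continuous_const).continuousOn
  rw [dist_self] at this
  exact this ⟨hr0, hr⟩

lemma exists_abs_re_sub_le_of_minWidth_lt {K : Set ℂ} (hK : IsCompact K) {W : ℝ}
    (hW : minWidth K < W) : ∃ u : ℂ, ‖u‖ = 1 ∧ ∀ z ∈ K, ∀ z' ∈ K,
      |((starRingEnd ℂ) u * z - (starRingEnd ℂ) u * z').re| ≤ W := by
  obtain ⟨_, ⟨u, hu, rfl⟩, hlt⟩ := exists_lt_of_csInf_lt (by exact ⟨_, 1, norm_one, rfl⟩) hW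
  refine ⟨u, hu, fun z hz z' hz' => ?_⟩
  set f := fun z => ((starRingEnd ℂ) u * z).re
  have hcpt : IsCompact (f '' K) := hK.image (by fun_prop)
  have hmem : ∀ y ∈ K, f y ∈ f '' K := fun y hy => ⟨y, hy, rfl⟩
  have h1 := le_csSup hcpt.bddAbove (hmem z hz)
  have h2 := csInf_le hcpt.bddBelow (hmem z' hz')
  have h3 := le_csSup hcpt.bddAbove (hmem z' hz')
  have h4 := csInf_le hcpt.bddBelow (hmem z hz)
  rw [Complex.sub_re, abs_le]
  constructor <;> linarith

noncomputable def twoPointPoly (a b : ℂ) (i j : ℕ) : ℂ[X] :=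
  (X - C a) ^ (i + 1) * (X - C b) ^ (j + 1)

section twoPointPoly

variable {a b : ℂ} {i j : ℕ}

lemma twoPointPoly_monic : (twoPointPoly a b i j).Monic :=
  ((monic_X_sub_C a).pow _).mul ((monic_X_sub_C b).pow _)

lemma natDegree_twoPointPoly : (twoPointPoly a b i j).natDegree = i + j + 2 := by
  rw [twoPointPoly, ((monic_X_sub_C a).pow _).natDegree_mul ((monic_X_sub_C b).pow _),
    natDegree_pow, natDegree_pow, natDegree_X_sub_C, natDegree_X_sub_C]
  ring

lemma eq_or_eq_of_isRoot_twoPointPoly {z : ℂ} (h : (twoPointPoly a b i j).IsRoot z) :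
    z = a ∨ z = b := by
  simpa [twoPointPoly, sub_eq_zero] using h

lemma norm_eval_twoPointPoly (z : ℂ) :
    ‖(twoPointPoly a b i j).eval z‖ = ‖z - a‖ ^ (i + 1) * ‖z - b‖ ^ (j + 1) := by
  simp [twoPointPoly]

lemma norm_eval_derivative_twoPointPoly (z : ℂ) :
    ‖(derivative (twoPointPoly a b i j)).eval z‖
      = ‖z - a‖ ^ i * ‖z - b‖ ^ j * ‖(i + 1 : ℂ) * (z - b) + (j + 1 : ℂ) * (z - a)‖ := by
  have : (derivative (twoPointPoly a b i j)).eval z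
      = (z - a) ^ i * (z - b) ^ j * ((i + 1 : ℂ) * (z - b) + (j + 1 : ℂ) * (z - a)) := by
    simp [twoPointPoly, derivative_mul, derivative_X_sub_C_pow]; ring
  rw [this, norm_mul, norm_mul, norm_pow, norm_pow]

lemma pow_le_polyNorm_twoPointPoly {K : Set ℂ} (hK : IsCompact K) {z₀ : ℂ} (hz₀ : z₀ ∈ K)
    {r : ℝ} (ha : dist z₀ a = r) (hb : r ≤ dist z₀ b) :
    r ^ (i + j + 2) ≤ polyNorm K (twoPointPoly a b i j) := by
  refine le_trans ?_ (norm_eval_le_polyNorm hK _ hz₀)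
  have hr : 0 ≤ r := ha ▸ dist_nonneg
  rw [norm_eval_twoPointPoly, ← dist_eq_norm, ← dist_eq_norm, ha,
    show i + j + 2 = (i + 1) + (j + 1) by ring, pow_add]
  gcongr

end twoPointPoly

lemma norm_eval_derivative_twoPointPoly_mul_le {K : Set ℂ} (hK : IsCompact K) {a b : ℂ}
    (ha : a ∈ K) (hb : b ∈ K) (hab : dist a b = Metric.diam K) (hd : 0 < Metric.diam K)
    {u : ℂ} (hu : ‖u‖ = 1) {W : ℝ} (hW : 0 < W)
    (hwidth : ∀ z ∈ K, ∀ z' ∈ K, |((starRingEnd ℂ) u * z - (starRingEnd ℂ) u * z').re| ≤ W)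
    {i j n : ℕ} (hji : j ≤ i) (hij : i ≤ j + 1) (hn : i + j + 2 = n)
    (hqn : Metric.diam K ^ 2 < 459 * n * W ^ 2) {z : ℂ} (hz : z ∈ K) :
    ‖(derivative (twoPointPoly a b i j)).eval z‖ * Metric.diam K ^ 2
      ≤ 600 * W * n * max ((Metric.diam K / 2) ^ n) ‖(twoPointPoly a b i j).eval z‖ := by
  set c := (starRingEnd ℂ) u
  have hc : ‖c‖ = 1 := by rw [Complex.norm_conj, hu]
  have hrot : ∀ z z' : ℂ, ‖c * z - c * z'‖ = ‖z - z'‖ := fun z z' => by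
    rw [← mul_sub, norm_mul, hc, one_mul]
  have hba : ‖b - a‖ = Metric.diam K := by rw [← dist_eq_norm, dist_comm, hab]
  have hdiam : ∀ y ∈ K, ‖z - y‖ ≤ Metric.diam K := fun y hy => by
    rw [← dist_eq_norm]; exact Metric.dist_le_diam_of_mem hK.isBounded hz hy
  have key := norm_pow_mul_pow_mul_le (z := c * z) (a := c * a) (b := c * b) hW
    (hwidth z hz a ha) (hwidth z hz b hb) (hwidth b hb a ha) (by rwa [hrot, hba])
    (by rw [hrot, hrot, hba]; exact hdiam a ha) (by rw [hrot, hrot, hba]; exact hdiam b hb)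
    hji hij hn (by rwa [hrot, hba])
  have hcomb : (i + 1 : ℂ) * (c * z - c * b) + (j + 1 : ℂ) * (c * z - c * a)
      = c * ((i + 1 : ℂ) * (z - b) + (j + 1 : ℂ) * (z - a)) := by ring
  rwa [hcomb, norm_mul, hc, one_mul, hrot, hrot, hrot, hba, ← norm_eval_twoPointPoly,
    ← norm_eval_derivative_twoPointPoly] at key

lemma polyNorm_derivative_twoPointPoly_mul_le {K : Set ℂ} (hK : IsCompact K) {a b : ℂ}
    (ha : a ∈ K) (hb : b ∈ K) (hab : dist a b = Metric.diam K) (hd : 0 < Metric.diam K)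
    (hw : 0 < minWidth K) {i j n : ℕ} (hji : j ≤ i) (hij : i ≤ j + 1) (hn : i + j + 2 = n)
    (hqn : Metric.diam K ^ 2 < 459 * n * minWidth K ^ 2)
    (hlow : (Metric.diam K / 2) ^ n ≤ polyNorm K (twoPointPoly a b i j)) :
    polyNorm K (derivative (twoPointPoly a b i j)) * Metric.diam K ^ 2
      ≤ 600 * minWidth K * n * polyNorm K (twoPointPoly a b i j) := by
  set N := polyNorm K (twoPointPoly a b i j)
  have hbound : ∀ W, minWidth K < W →
      polyNorm K (derivative (twoPointPoly a b i j)) * Metric.diam K ^ 2 ≤ W * (600 * n * N) := by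
    intro W hW
    obtain ⟨u, hu, hwidth⟩ := exists_abs_re_sub_le_of_minWidth_lt hK hW
    rw [← le_div_iff₀ (by positivity)]
    refine polyNorm_le ⟨a, ha⟩ fun z hz => ?_
    rw [le_div_iff₀ (by positivity)]
    refine (norm_eval_derivative_twoPointPoly_mul_le hK ha hb hab hd hu (hw.trans hW) hwidth
      hji hij hn (hqn.trans_le (by gcongr)) hz).trans ?_
    rw [show W * (600 * n * N) = 600 * W * n * N by ring]
    have := hw.trans hW
    gcongr
    exact max_le hlow (norm_eval_le_polyNorm hK _ hz)
  have := le_mul_of_forall_lt₀ fun W hW B hB => (hbound W hW).trans (by gcongr; linarith)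
  linarith

lemma invMarkov_one_le {K : Set ℂ} (hK : IsCompact K) {a z₀ : ℂ} (ha : a ∈ K) (hz₀ : z₀ ∈ K)
    (hpos : 0 < dist z₀ a) : invMarkov 1 K ≤ 1 / dist z₀ a := by
  have hroots : ∀ z, (X - C a).IsRoot z → z ∈ K := fun z hz => by
    rwa [IsRoot.def, eval_sub, eval_X, eval_C, sub_eq_zero.1 hz] at *
  refine (invMarkov_le (X_sub_C_ne_zero a) (natDegree_X_sub_C a) hroots).trans ?_
  rw [derivative_X_sub_C]
  refine div_le_div₀ zero_le_one (polyNorm_le ⟨a, ha⟩ fun z _ => by simp) hpos ?_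
  have := norm_eval_le_polyNorm hK (X - C a) hz₀
  rwa [eval_sub, eval_X, eval_C, ← dist_eq_norm] at this

theorem stmt_4 (K : Set ℂ) (hK : IsCompact K) (hconn : IsConnected K)
    (hd : 0 < Metric.diam K) (hw : 0 < minWidth K) (n : ℕ)
    (hn : (Metric.diam K) ^ 2 / (459 * (minWidth K) ^ 2) < (n : ℝ)) :
    invMarkov n K ≤ 600 * minWidth K * n / (Metric.diam K) ^ 2 := by
  set d := Metric.diam K
  set w := minWidth K
  have hqn : d ^ 2 < 459 * n * w ^ 2 := by rw [div_lt_iff₀ (by positivity)] at hn; linarith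
  obtain ⟨a, ha, b, hb, hab⟩ := hK.exists_dist_eq_diam hconn.nonempty
  obtain ⟨z₀, hz₀, hz₀a⟩ := hconn.isPreconnected.exists_dist_eq ha hb (r := d / 2)
    (by positivity) (by rw [dist_comm, hab]; linarith)
  have hz₀b : d / 2 ≤ dist z₀ b := by linarith [dist_triangle_left a b z₀]
  obtain rfl | ⟨i, j, hji, hij, rfl⟩ : n = 1 ∨ ∃ i j, j ≤ i ∧ i ≤ j + 1 ∧ i + j + 2 = n := by
    rcases n with _ | _ | n
    · push_cast at hqn; nlinarith
    · exact .inl rfl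
    · exact .inr ⟨(n + 1) / 2, n / 2, by omega, by omega, by omega⟩
  · calc invMarkov 1 K ≤ 1 / (d / 2) := hz₀a ▸ invMarkov_one_le hK ha hz₀ (by rw [hz₀a]; positivity)
      _ ≤ 600 * w * (1 : ℕ) / d ^ 2 := by
        push_cast at hqn
        have : d ≤ 300 * w := by nlinarith
        rw [div_le_div_iff₀ (by positivity) (by positivity)]; push_cast; nlinarith
  · have hlow := pow_le_polyNorm_twoPointPoly (i := i) (j := j) hK hz₀ hz₀a hz₀b
    have hroots : ∀ z, (twoPointPoly a b i j).IsRoot z → z ∈ K := fun z hz =>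
      (eq_or_eq_of_isRoot_twoPointPoly hz).elim (· ▸ ha) (· ▸ hb)
    refine (invMarkov_le twoPointPoly_monic.ne_zero natDegree_twoPointPoly hroots).trans ?_
    rw [div_le_div_iff₀ ((by positivity : (0 : ℝ) < (d / 2) ^ (i + j + 2)).trans_le hlow)
      (by positivity)]
    exact polyNorm_derivative_twoPointPoly_mul_le hK ha hb hab hd hw hji hij rfl hqn hlow
end

section
/- Let K₁ ⊆ ℂ be a connected compact set with 1 ∈ K₁ and −1 ∈ K₁, and let m ≥ 1 be an integer. Then the polynomial p_m(z) = (z² − 1)^m satisfies, for every z ∈ K₁, |p_m'(z)| ≤ 2m·|z|·‖p_m‖, where ‖f‖ = sup_{z∈K₁} |f(z)|. -/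
open Polynomial

lemma IsPreconnected.exists_re_eq_zero {K : Set ℂ} (hK : IsPreconnected K) (h1 : (1 : ℂ) ∈ K)
    (hm1 : (-1 : ℂ) ∈ K) : ∃ z ∈ K, z.re = 0 :=
  hK.intermediate_value hm1 h1 Complex.continuous_re.continuousOn (by simp)

lemma Complex.one_le_norm_sq_sub_one {z : ℂ} (hz : z.re = 0) : 1 ≤ ‖z ^ 2 - 1‖ := by
  have hre : (z ^ 2 - 1).re = -(z.im ^ 2 + 1) := by
    simp only [sq, Complex.sub_re, Complex.mul_re, hz, mul_zero, zero_sub, Complex.one_re]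
    ring
  calc (1 : ℝ) ≤ |(z ^ 2 - 1).re| := by
        rw [hre, abs_neg, abs_of_nonneg (by positivity)]
        linarith [sq_nonneg z.im]
    _ ≤ ‖z ^ 2 - 1‖ := Complex.abs_re_le_norm _

lemma pow_pred_le_max_one_pow {R : Type*} [Semiring R] [LinearOrder R] [IsStrictOrderedRing R]
    {a : R} (ha : 0 ≤ a) (m : ℕ) : a ^ (m - 1) ≤ max 1 (a ^ m) := by
  rcases le_or_gt a 1 with h | h
  · exact (pow_le_one₀ ha h).trans (le_max_left _ _)
  · exact (pow_le_pow_right₀ h.le (Nat.sub_le m 1)).trans (le_max_right _ _)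

lemma derivative_X_sq_sub_one_pow {R : Type*} [CommRing R] (m : ℕ) :
    derivative ((X ^ 2 - 1 : R[X]) ^ m) = C (2 * m : R) * X * (X ^ 2 - 1) ^ (m - 1) := by
  rw [derivative_pow, derivative_sub, derivative_X_pow, derivative_one]
  simp only [map_mul, map_natCast, map_ofNat, Nat.cast_ofNat, sub_zero]
  ring

lemma norm_sq_sub_one_pow_le_polyNorm {K : Set ℂ} (hK : IsCompact K) {z : ℂ} (hz : z ∈ K)
    (m : ℕ) : ‖z ^ 2 - 1‖ ^ m ≤ polyNorm K ((X ^ 2 - 1) ^ m) := by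
  have h := norm_eval_le_polyNorm hK ((X ^ 2 - 1) ^ m : ℂ[X]) hz
  simp only [eval_pow, eval_sub, eval_X, eval_one, norm_pow] at h
  exact h

lemma one_le_polyNorm_X_sq_sub_one_pow {K : Set ℂ} (hK : IsCompact K) (hconn : IsPreconnected K)
    (h1 : (1 : ℂ) ∈ K) (hm1 : (-1 : ℂ) ∈ K) (m : ℕ) :
    1 ≤ polyNorm K ((X ^ 2 - 1) ^ m) := by
  obtain ⟨z, hzK, hz⟩ := hconn.exists_re_eq_zero h1 hm1
  exact (one_le_pow₀ (Complex.one_le_norm_sq_sub_one hz)).trans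
    (norm_sq_sub_one_pow_le_polyNorm hK hzK m)

theorem stmt_12_general (K₁ : Set ℂ) (hK : IsCompact K₁) (hconn : IsConnected K₁)
    (h1 : (1 : ℂ) ∈ K₁) (hm1 : (-1 : ℂ) ∈ K₁) (m : ℕ) :
    ∀ z ∈ K₁,
      ‖(Polynomial.derivative (((X : Polynomial ℂ) ^ 2 - 1) ^ m)).eval z‖ ≤
        2 * m * ‖z‖ * polyNorm K₁ (((X : Polynomial ℂ) ^ 2 - 1) ^ m) := by
  intro z hz
  have hpow : ‖z ^ 2 - 1‖ ^ (m - 1) ≤ polyNorm K₁ ((X ^ 2 - 1) ^ m) :=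
    (pow_pred_le_max_one_pow (norm_nonneg _) m).trans <|
      max_le (one_le_polyNorm_X_sq_sub_one_pow hK hconn.isPreconnected h1 hm1 m)
        (norm_sq_sub_one_pow_le_polyNorm hK hz m)
  rw [derivative_X_sq_sub_one_pow]
  simp only [eval_mul, eval_C, eval_X, eval_pow, eval_sub, eval_one, norm_mul, norm_pow,
    Complex.norm_ofNat, Complex.norm_natCast]
  gcongr

theorem stmt_12 (K₁ : Set ℂ) (hK : IsCompact K₁) (hconn : IsConnected K₁)
    (h1 : (1 : ℂ) ∈ K₁) (hm1 : (-1 : ℂ) ∈ K₁) (m : ℕ) (hm : 1 ≤ m) :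
    ∀ z ∈ K₁,
      ‖(Polynomial.derivative (((X : Polynomial ℂ) ^ 2 - 1) ^ m)).eval z‖ ≤
        2 * m * ‖z‖ * polyNorm K₁ (((X : Polynomial ℂ) ^ 2 - 1) ^ m) :=
  stmt_12_general K₁ hK hconn h1 hm1 m
end

section
/- Let w be a real number with 0 ≤ w < 3/7, let m ≥ 100 be an integer, and define h(t) = (1 + w² − t)² + 4·w²·t and g(t) = (t + w²)·(h(t))^{m−1}. Then for every real t with 1 − w ≤ t ≤ 1, one has g(t) ≤ 3·w². -/
/-!
Writing `s = t - 1 + w²`, the quadratic is `h(t) = s² + 4w²`, and on `1 - w ≤ t ≤ 1` (with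
`0 ≤ w ≤ 1`) we have `|s| ≤ w`, so `h(t) ≤ 5w²`. For `w < 3/7` this gives `h(t) ≤ 45/49 < 1`, hence
`g(t) ≤ (t + w²) · 5w² · (45/49)^(m-2) ≤ (58/49) · 5 · (45/49)^98 · w² ≤ 3w²`.
-/

lemma quadratic_eq_sq_add (w t : ℝ) :
    (1 + w ^ 2 - t) ^ 2 + 4 * w ^ 2 * t = (t - 1 + w ^ 2) ^ 2 + 4 * w ^ 2 := by
  ring

lemma quadratic_le_five_mul_sq {w t : ℝ} (hw0 : 0 ≤ w) (hw1 : w ≤ 1) (ht1 : 1 - w ≤ t)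
    (ht2 : t ≤ 1) : (1 + w ^ 2 - t) ^ 2 + 4 * w ^ 2 * t ≤ 5 * w ^ 2 := by
  have hsq : (t - 1 + w ^ 2) ^ 2 ≤ w ^ 2 := by
    have hw2 : w ^ 2 ≤ w := by nlinarith
    exact sq_le_sq' (by nlinarith) (by linarith)
  rw [quadratic_eq_sq_add]
  linarith

lemma pow_succ_le_mul_pow {x a b : ℝ} (hx : 0 ≤ x) (hxa : x ≤ a) (hxb : x ≤ b) (n : ℕ) :
    x ^ (n + 1) ≤ a * b ^ n := by
  rw [pow_succ']
  exact mul_le_mul hxa (pow_le_pow_left₀ hx hxb n) (pow_nonneg hx n) (hx.trans hxa)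

theorem stmt_17 (w : ℝ) (hw0 : 0 ≤ w) (hw : w < 3 / 7) (m : ℕ) (hm : 100 ≤ m)
    (t : ℝ) (ht1 : 1 - w ≤ t) (ht2 : t ≤ 1) :
    (t + w ^ 2) * ((1 + w ^ 2 - t) ^ 2 + 4 * w ^ 2 * t) ^ (m - 1) ≤ 3 * w ^ 2 := by
  have hh0 : 0 ≤ (1 + w ^ 2 - t) ^ 2 + 4 * w ^ 2 * t := by
    rw [quadratic_eq_sq_add]; positivity
  set h := (1 + w ^ 2 - t) ^ 2 + 4 * w ^ 2 * t
  have hw2 : w ^ 2 ≤ 9 / 49 := by nlinarith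
  have hh : h ≤ 5 * w ^ 2 := quadratic_le_five_mul_sq hw0 (by linarith) ht1 ht2
  have hpow : h ^ (m - 1) ≤ 5 * w ^ 2 * (45 / 49) ^ 98 :=
    calc h ^ (m - 1) = h ^ (m - 2 + 1) := by congr 1; omega
      _ ≤ 5 * w ^ 2 * (45 / 49) ^ (m - 2) := pow_succ_le_mul_pow hh0 hh (by linarith) _
      _ ≤ 5 * w ^ 2 * (45 / 49) ^ 98 :=
        mul_le_mul_of_nonneg_left (pow_le_pow_of_le_one (by norm_num) (by norm_num) (by omega))
          (by positivity)
  calc (t + w ^ 2) * h ^ (m - 1) ≤ 58 / 49 * (5 * w ^ 2 * (45 / 49) ^ 98) :=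
        mul_le_mul (by linarith) hpow (pow_nonneg hh0 _) (by norm_num)
    _ = 58 / 49 * 5 * (45 / 49) ^ 98 * w ^ 2 := by ring
    _ ≤ 3 * w ^ 2 := by gcongr; norm_num
end

section
/- Let w be a real number with 0 ≤ w < 3/7, let m ≥ 100 be an integer, and define h(t) = (1 + w² − t)² + 4·w²·t and g(t) = (t + w²)·(h(t))^{m−1}. Then for every real t with 2·w² ≤ t ≤ 1, one has g(t) ≤ max{3·w², 2/m}. -/
/-!
Put `s = w²`, `a = t + s` and `x = a (2 - a) - 4 s`; then `h(t) = 1 - x` with `0 ≤ x ≤ 1`, so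
`g(t) = a (1 - x)^(m-1)`. If `x ≥ 1/5` the geometric factor `(4/5)^(m-1)` alone beats `2/m`.
If `x < 1/5` then `a` is close to its lower end `3 s`, namely `a - 3 s ≤ 1.98 x`; with
`M = max (3 s) (2/m)` and `(m-1) M ≥ 2 (m-1)/m ≥ 1.98` this gives `a ≤ M (1 + (m-1) x)`, and the
Bernoulli-type bound `(1 + n x)(1 - x)^n ≤ 1` turns that into `g(t) ≤ M`.
-/

theorem one_add_mul_mul_one_sub_pow_le_one_s18 {x : ℝ} (hx₀ : -1 ≤ x) (hx₁ : x ≤ 1) (n : ℕ) :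
    (1 + n * x) * (1 - x) ^ n ≤ 1 := by
  have hsq : (1 + x) ^ n * (1 - x) ^ n ≤ 1 := by
    rw [← mul_pow]
    exact pow_le_one₀ (by nlinarith) (by nlinarith [sq_nonneg x])
  calc (1 + n * x) * (1 - x) ^ n ≤ (1 + x) ^ n * (1 - x) ^ n := by
        gcongr
        exact one_add_mul_le_pow (by linarith) n
    _ ≤ 1 := hsq

theorem mul_one_sub_pow_le_of_le_mul {a x M : ℝ} {n : ℕ} (hx₀ : 0 ≤ x) (hx₁ : x ≤ 1)
    (hM : 0 ≤ M) (ha : a ≤ M * (1 + n * x)) : a * (1 - x) ^ n ≤ M :=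
  calc a * (1 - x) ^ n ≤ M * (1 + n * x) * (1 - x) ^ n := by gcongr
    _ = M * ((1 + n * x) * (1 - x) ^ n) := mul_assoc _ _ _
    _ ≤ M * 1 := by gcongr; exact one_add_mul_mul_one_sub_pow_le_one_s18 (by linarith) hx₁ n
    _ = M := mul_one M

theorem add_one_mul_four_fifths_pow_le_one {n : ℕ} (hn : 99 ≤ n) :
    ((n : ℝ) + 1) * (4 / 5) ^ n ≤ 1 := by
  induction n, hn using Nat.le_induction with
  | base => norm_num
  | succ n hn ih =>
    have hn' : (99 : ℝ) ≤ n := by exact_mod_cast hn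
    calc ((↑(n + 1) : ℝ) + 1) * (4 / 5) ^ (n + 1)
        = 4 / 5 * (n + 2) * (4 / 5) ^ n := by push_cast; ring
      _ ≤ (n + 1) * (4 / 5) ^ n := by gcongr; linarith
      _ ≤ 1 := ih

theorem sub_three_mul_le_of_lt_one_fifth {s a : ℝ} (hs₀ : 0 ≤ s) (hs : s ≤ 9 / 49)
    (ha₀ : 3 * s ≤ a) (ha₁ : a ≤ 1 + s) (hx : a * (2 - a) - 4 * s < 1 / 5) :
    a - 3 * s ≤ 1.98 * (a * (2 - a) - 4 * s) := by
  nlinarith [mul_nonneg (sub_nonneg.2 ha₀) (sub_nonneg.2 ha₁),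
    mul_nonneg (sub_nonneg.2 ha₀) (sub_nonneg.2 hx.le),
    mul_nonneg (sub_nonneg.2 ha₁) (sub_nonneg.2 hx.le),
    mul_nonneg hs₀ (sub_nonneg.2 hs), sq_nonneg (a - 3 * s), sq_nonneg a]

theorem stmt_18 (w : ℝ) (hw0 : 0 ≤ w) (hw : w < 3 / 7) (m : ℕ) (hm : 100 ≤ m)
    (t : ℝ) (ht1 : 2 * w ^ 2 ≤ t) (ht2 : t ≤ 1) :
    (t + w ^ 2) * ((1 + w ^ 2 - t) ^ 2 + 4 * w ^ 2 * t) ^ (m - 1) ≤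
      max (3 * w ^ 2) (2 / (m : ℝ)) := by
  obtain ⟨n, rfl⟩ : ∃ n, m = n + 1 := ⟨m - 1, by omega⟩
  have hn : 99 ≤ n := by omega
  have hs : w ^ 2 ≤ 9 / 49 := by nlinarith
  set s := w ^ 2
  set a := t + s
  set x := a * (2 - a) - 4 * s
  have hbase : (1 + s - t) ^ 2 + 4 * s * t = 1 - x := by ring
  have ha₀ : 3 * s ≤ a := by linarith
  have ha₁ : a ≤ 1 + s := by linarith
  have hx₀ : 0 ≤ x := by
    nlinarith [mul_nonneg (sub_nonneg.2 ha₀) (sub_nonneg.2 ha₁), sq_nonneg w]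
  have hx₁ : x ≤ 1 := by nlinarith [sq_nonneg (1 + s - t), sq_nonneg w]
  rw [hbase, Nat.add_sub_cancel]
  push_cast
  rcases le_or_gt (1 / 5) x with hx | hx
  · refine le_max_of_le_right ?_
    calc a * (1 - x) ^ n ≤ 2 * (4 / 5) ^ n := by gcongr <;> linarith
      _ ≤ 2 / (n + 1) := by
        rw [le_div_iff₀ (by positivity)]
        nlinarith [add_one_mul_four_fifths_pow_le_one hn]
  · refine mul_one_sub_pow_le_of_le_mul hx₀ hx₁ (by positivity) ?_
    have hMn : 1.98 ≤ max (3 * s) (2 / (n + 1)) * n := by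
      have hn' : (99 : ℝ) ≤ n := by exact_mod_cast hn
      calc (1.98 : ℝ) ≤ 2 / (n + 1) * n := by
            rw [div_mul_eq_mul_div, le_div_iff₀ (by positivity)]
            linarith
        _ ≤ _ := by gcongr; exact le_max_right _ _
    nlinarith [sub_three_mul_le_of_lt_one_fifth (sq_nonneg w) hs ha₀ ha₁ hx,
      le_max_left (3 * s) (2 / ((n : ℝ) + 1))]
end

section
/- Let w be a real number with 0 ≤ w < 3/7, let m ≥ 100 be an integer, and define f(x, y) = √(x² + y²) · (√((1 + y² − x²)² + 4·x²·y²))^{m−1}. Then max{ f(x, y) : √2·w ≤ |x| ≤ 1, |y| ≤ w } ≤ max{ √3·w, √2/√m }. -/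
/-!
Put `a = x² + y² = |z|²` and `s = (1 + y² - x²)² + 4x²y² = (1 - a)² + 4y² = |z² - 1|²`, so that
`f² = a sⁿ` with `n = m - 1`. The constraint `y² ≤ w² ≤ x²/2` gives `3y² ≤ a`, hence
`s ≤ 1 - 2a/3 + a²`. For `a ≤ 1/4` this is `s ≤ 1 - 5a/12`, and `a sⁿ ≤ a e^{-5an/12} ≤ 12/(5en)`
because `t e^{-t} ≤ 1/e`. For `a ≥ 1/4` one checks `s ≤ 15/16`, and `a ≤ 58/49` times
`e^{-n/16}` is small once `n ≥ 99`. Either way `f² ≤ 2/m`.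
-/

open Real

lemma pow_le_exp_neg_mul {s t : ℝ} (hs : 0 ≤ s) (hst : s ≤ 1 - t) (n : ℕ) :
    s ^ n ≤ exp (-(t * n)) :=
  calc s ^ n ≤ (1 - t) ^ n := pow_le_pow_left₀ hs hst n
    _ ≤ exp (-t) ^ n := pow_le_pow_left₀ (hs.trans hst) (one_sub_le_exp_neg t) n
    _ = exp (-(t * n)) := by rw [← exp_nat_mul]; ring_nf

section

variable {a y : ℝ} {n : ℕ}

lemma mul_pow_le_two_div_of_le_quarter (hy : 3 * y ^ 2 ≤ a) (ha : a ≤ 1 / 4) (hn : 1 ≤ n) :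
    a * ((1 - a) ^ 2 + 4 * y ^ 2) ^ n ≤ 2 / (n + 1) := by
  have ha0 : 0 ≤ a := by nlinarith
  have hn' : (1 : ℝ) ≤ n := by exact_mod_cast hn
  have hs : (1 - a) ^ 2 + 4 * y ^ 2 ≤ 1 - 5 / 12 * a := by nlinarith
  set t := 5 / 12 * a * n with ht
  calc a * ((1 - a) ^ 2 + 4 * y ^ 2) ^ n ≤ a * exp (-t) :=
        mul_le_mul_of_nonneg_left (pow_le_exp_neg_mul (by positivity) hs n) ha0
    _ = t * exp (-t) / (5 / 12 * n) := by rw [ht]; field_simp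
    _ ≤ exp (-1) / (5 / 12 * n) := by gcongr; exact mul_exp_neg_le_exp_neg_one t
    _ ≤ 2 / (n + 1) := by
        rw [div_le_div_iff₀ (by positivity) (by positivity)]
        nlinarith [exp_neg_one_lt_d9]

lemma mul_pow_le_two_div_of_quarter_le (hy : 3 * y ^ 2 ≤ a) (hy' : y ^ 2 ≤ 9 / 49)
    (ha : 1 / 4 ≤ a) (ha' : a ≤ 58 / 49) (hn : 99 ≤ n) :
    a * ((1 - a) ^ 2 + 4 * y ^ 2) ^ n ≤ 2 / (n + 1) := by
  have hn' : (99 : ℝ) ≤ n := by exact_mod_cast hn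
  -- the worst case is `a = 27/49`, where both bounds on `y²` are attained: `s ≈ 0.936`
  have hs : (1 - a) ^ 2 + 4 * y ^ 2 ≤ 1 - 1 / 16 := by
    nlinarith [mul_nonneg (sub_nonneg.2 ha) (sub_nonneg.2 ha'),
      mul_nonneg (sub_nonneg.2 hy') (sub_nonneg.2 ha), mul_nonneg (sub_nonneg.2 hy') (sub_nonneg.2 ha')]
  -- `e^{-n/16} = (e^{-n/32})²` and `(n/32) e^{-n/32} ≤ 1/e`
  have hE : (n : ℝ) ^ 2 * exp (-(1 / 16 * n)) ≤ 1024 * exp (-1) ^ 2 :=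
    calc (n : ℝ) ^ 2 * exp (-(1 / 16 * n)) = 1024 * (n / 32 * exp (-(n / 32))) ^ 2 := by
          rw [mul_pow, ← exp_nat_mul]; ring_nf
      _ ≤ 1024 * exp (-1) ^ 2 := by gcongr; exact mul_exp_neg_le_exp_neg_one _
  calc a * ((1 - a) ^ 2 + 4 * y ^ 2) ^ n ≤ 58 / 49 * exp (-(1 / 16 * n)) :=
        mul_le_mul ha' (pow_le_exp_neg_mul (by positivity) hs n) (by positivity) (by positivity)
    _ ≤ 2 / (n + 1) := by
        rw [le_div_iff₀ (by positivity)]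
        nlinarith [exp_neg_one_lt_d9, exp_pos (-1), exp_pos (-(1 / 16 * n)),
          mul_le_mul_of_nonneg_left hE (by positivity : (0 : ℝ) ≤ n + 1)]

lemma mul_pow_le_two_div (hy : 3 * y ^ 2 ≤ a) (hy' : y ^ 2 ≤ 9 / 49) (ha : a ≤ 58 / 49)
    (hn : 99 ≤ n) : a * ((1 - a) ^ 2 + 4 * y ^ 2) ^ n ≤ 2 / (n + 1) := by
  rcases le_total a (1 / 4) with h | h
  · exact mul_pow_le_two_div_of_le_quarter hy h (by omega)
  · exact mul_pow_le_two_div_of_quarter_le hy hy' h ha hn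

end

theorem stmt_19_general (w : ℝ) (hw : w < 3 / 7) (m : ℕ) (hm : 100 ≤ m)
    (x y : ℝ) (hx1 : Real.sqrt 2 * w ≤ |x|) (hx2 : |x| ≤ 1) (hy : |y| ≤ w) :
    Real.sqrt (x ^ 2 + y ^ 2) *
        (Real.sqrt ((1 + y ^ 2 - x ^ 2) ^ 2 + 4 * x ^ 2 * y ^ 2)) ^ (m - 1) ≤
      max (Real.sqrt 3 * w) (Real.sqrt 2 / Real.sqrt m) := by
  obtain ⟨n, rfl⟩ : ∃ n, m = n + 1 := ⟨m - 1, by omega⟩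
  have hw0 : 0 ≤ w := (abs_nonneg y).trans hy
  have hyw : y ^ 2 ≤ w ^ 2 := sq_le_sq' (abs_le.1 hy).1 (abs_le.1 hy).2
  have hxw : 2 * w ^ 2 ≤ x ^ 2 := by
    have h := pow_le_pow_left₀ (by positivity) hx1 2
    rwa [mul_pow, sq_abs, sq_sqrt zero_le_two] at h
  have hx : x ^ 2 ≤ 1 := by
    have h := pow_le_pow_left₀ (abs_nonneg x) hx2 2
    rwa [sq_abs, one_pow] at h
  have hw' : w ^ 2 ≤ 9 / 49 := by nlinarith
  have hs : (1 + y ^ 2 - x ^ 2) ^ 2 + 4 * x ^ 2 * y ^ 2 = (1 - (x ^ 2 + y ^ 2)) ^ 2 + 4 * y ^ 2 := by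
    ring
  have hf := mul_pow_le_two_div (a := x ^ 2 + y ^ 2) (y := y) (n := n)
    (by linarith) (by linarith) (by linarith) (by omega)
  refine le_max_of_le_right ?_
  rw [add_tsub_cancel_right, hs, ← sqrt_div zero_le_two, le_sqrt (by positivity) (by positivity),
    mul_pow, ← pow_mul, mul_comm n, pow_mul, sq_sqrt (by positivity), sq_sqrt (by positivity)]
  exact_mod_cast hf

theorem stmt_19 (w : ℝ) (hw0 : 0 ≤ w) (hw : w < 3 / 7) (m : ℕ) (hm : 100 ≤ m)
    (x y : ℝ) (hx1 : Real.sqrt 2 * w ≤ |x|) (hx2 : |x| ≤ 1) (hy : |y| ≤ w) :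
    Real.sqrt (x ^ 2 + y ^ 2) *
        (Real.sqrt ((1 + y ^ 2 - x ^ 2) ^ 2 + 4 * x ^ 2 * y ^ 2)) ^ (m - 1) ≤
      max (Real.sqrt 3 * w) (Real.sqrt 2 / Real.sqrt m) :=
  stmt_19_general w hw m hm x y hx1 hx2 hy
end
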